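/- arXiv:math/9805123 — 2 statements merged into one kernel-verified Lean document; each statement's English description precedes it below -/
import Mathlib

section
/- Both ∏_{|λ|=n} P(λ) and ∏_{|λ|=n} F(λ) are equal to ∏_{i>0} i^{Σ_{j>0} p(n−ij)}, where p denotes the partition function (with p(m) = 0 for m < 0). -/
/-- `P(λ) = ∏_k k^{i_k}`, the product of all parts of the partition. -/
def partitionP {n : ℕ} (l : Nat.Partition n) : ℕ := l.parts.prod

/-- `F(λ) = ∏_k (i_k)!`, the product of factorials of the multiplicities. -/
def partitionF {n : ℕ} (l : Nat.Partition n) : ℕ :=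
  ∏ k ∈ l.parts.toFinset, Nat.factorial (l.parts.count k)

/-- the partition function `p(m)` -/
def partitionFun (m : ℕ) : ℕ := Fintype.card (Nat.Partition m)

/-!
Let `m_i(λ)` be the multiplicity of `i` in `λ`. Since `P(λ) = ∏_i i ^ m_i(λ)` and
`m_i(λ)! = ∏_{1 ≤ j ≤ m_i(λ)} j`, both products over `λ ⊢ n` are governed by the numbers
`N(i, j) = #{λ ⊢ n | j ≤ m_i(λ)}`: the first is `∏_i i ^ ∑_j N(i, j)`, the second
`∏_j j ^ ∑_i N(i, j)`. Removing `j` copies of the part `i` shows `N(i, j) = p(n - i j)`,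
which is symmetric in `i` and `j`, so the two agree.
-/

open Finset

theorem Finset.Icc_filter_le_of_le_right {α : Type*} [Preorder α] [LocallyFiniteOrder α]
    {a b c : α} [DecidablePred (· ≤ c)] (hcb : c ≤ b) :
    {x ∈ Icc a b | x ≤ c} = Icc a c := by
  ext x
  simp only [mem_filter, mem_Icc]
  exact ⟨fun h => ⟨h.1.1, h.2⟩, fun h => ⟨⟨h.1, h.2.trans hcb⟩, h.2⟩⟩

theorem Nat.card_Icc_filter_le {c n : ℕ} (hc : c ≤ n) : #{j ∈ Icc 1 n | j ≤ c} = c := by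
  rw [Icc_filter_le_of_le_right hc, Nat.card_Icc, Nat.add_sub_cancel]

theorem Nat.prod_Icc_filter_le_eq_factorial {c n : ℕ} (hc : c ≤ n) :
    ∏ j ∈ Icc 1 n with j ≤ c, j = c.factorial := by
  rw [Icc_filter_le_of_le_right hc, ← Finset.Ico_add_one_right_eq_Icc,
    Finset.prod_Ico_id_eq_factorial]

namespace Nat.Partition

variable {n : ℕ}

theorem count_parts_le (l : n.Partition) (i : ℕ) : l.parts.count i ≤ n := by
  have hcard : l.parts.card • 1 ≤ l.parts.sum :=
    Multiset.card_nsmul_le_sum fun _ hx => l.parts_pos hx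
  rw [smul_eq_mul, mul_one, l.parts_sum] at hcard
  exact (Multiset.count_le_card i l.parts).trans hcard

theorem mul_le_of_le_count_parts {l : n.Partition} {i j : ℕ} (hj : j ≤ l.parts.count i) :
    i * j ≤ n := by
  obtain ⟨u, hu⟩ := Multiset.le_iff_exists_add.mp (Multiset.le_count_iff_replicate_le.mp hj)
  have hsum := congrArg Multiset.sum hu
  rw [l.parts_sum, Multiset.sum_add, Multiset.sum_replicate, smul_eq_mul] at hsum
  rw [mul_comm]
  omega

theorem parts_toFinset_subset_Icc (l : n.Partition) : l.parts.toFinset ⊆ Icc 1 n := fun _ hk =>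
  mem_Icc.mpr ⟨l.parts_pos (Multiset.mem_toFinset.mp hk),
    le_of_mem_parts (Multiset.mem_toFinset.mp hk)⟩

def removeReplicateEquiv {i j : ℕ} (hi : 1 ≤ i) (hij : i * j ≤ n) :
    {l : n.Partition // j ≤ l.parts.count i} ≃ (n - i * j).Partition where
  toFun l :=
    { parts := l.1.parts - Multiset.replicate j i
      parts_pos := fun hp => l.1.parts_pos (Multiset.mem_of_le tsub_le_self hp)
      parts_sum := by
        have hsum := congrArg Multiset.sum
          (tsub_add_cancel_of_le (Multiset.le_count_iff_replicate_le.mp l.2))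
        rw [Multiset.sum_add, Multiset.sum_replicate, smul_eq_mul, l.1.parts_sum] at hsum
        rw [mul_comm]
        omega }
  invFun m :=
    ⟨{ parts := m.parts + Multiset.replicate j i
       parts_pos := fun hp => by
         rcases Multiset.mem_add.mp hp with hp | hp
         · exact m.parts_pos hp
         · rwa [Multiset.eq_of_mem_replicate hp]
       parts_sum := by
         rw [Multiset.sum_add, m.parts_sum, Multiset.sum_replicate, smul_eq_mul, mul_comm j i]
         omega },
     by simp⟩
  left_inv l := Subtype.ext <| Nat.Partition.ext <|
    tsub_add_cancel_of_le (Multiset.le_count_iff_replicate_le.mp l.2)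
  right_inv m := Nat.Partition.ext <| add_tsub_cancel_right _ _

theorem card_filter_le_count_parts {i : ℕ} (hi : 1 ≤ i) (j : ℕ) :
    #{l : n.Partition | j ≤ l.parts.count i}
      = if i * j ≤ n then Fintype.card (n - i * j).Partition else 0 := by
  rw [← Fintype.card_subtype]
  split_ifs with hij
  · exact Fintype.card_congr (removeReplicateEquiv hi hij)
  · exact Fintype.card_eq_zero_iff.mpr ⟨fun l => hij (mul_le_of_le_count_parts l.2)⟩

theorem prod_parts_eq_prod_pow_count (l : n.Partition) :
    l.parts.prod = ∏ i ∈ Icc 1 n, i ^ l.parts.count i :=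
  prod_multiset_count_of_subset _ _ l.parts_toFinset_subset_Icc

theorem prod_factorial_count_parts_eq (l : n.Partition) :
    ∏ i ∈ l.parts.toFinset, (l.parts.count i).factorial
      = ∏ i ∈ Icc 1 n, ∏ j ∈ Icc 1 n with j ≤ l.parts.count i, j := by
  rw [prod_subset l.parts_toFinset_subset_Icc fun i _ hi => by
    rw [Multiset.count_eq_zero_of_notMem (Multiset.mem_toFinset.not.mp hi), factorial_zero]]
  exact prod_congr rfl fun i _ => (Nat.prod_Icc_filter_le_eq_factorial (l.count_parts_le i)).symm

end Nat.Partition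

theorem prod_partitionP_eq (n : ℕ) :
    ∏ l : n.Partition, partitionP l
      = ∏ i ∈ Icc 1 n, i ^ ∑ j ∈ Icc 1 n, #{l : n.Partition | j ≤ l.parts.count i} := by
  have hcount (i : ℕ) : ∑ l : n.Partition, l.parts.count i
      = ∑ j ∈ Icc 1 n, #{l : n.Partition | j ≤ l.parts.count i} :=
    calc ∑ l : n.Partition, l.parts.count i
        = ∑ l : n.Partition, #{j ∈ Icc 1 n | j ≤ l.parts.count i} :=
          sum_congr rfl fun l _ => (Nat.card_Icc_filter_le (l.count_parts_le i)).symm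
      _ = _ := sum_card_bipartiteAbove_eq_sum_card_bipartiteBelow
          (fun (l : n.Partition) (j : ℕ) => j ≤ l.parts.count i)
  calc ∏ l : n.Partition, partitionP l
      = ∏ i ∈ Icc 1 n, ∏ l : n.Partition, i ^ l.parts.count i := by
        simp_rw [partitionP, Nat.Partition.prod_parts_eq_prod_pow_count]
        exact prod_comm
    _ = _ := prod_congr rfl fun i _ => by rw [prod_pow_eq_pow_sum, hcount]

theorem prod_partitionF_eq (n : ℕ) :
    ∏ l : n.Partition, partitionF l
      = ∏ j ∈ Icc 1 n, j ^ ∑ i ∈ Icc 1 n, #{l : n.Partition | j ≤ l.parts.count i} := by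
  calc ∏ l : n.Partition, partitionF l
      = ∏ l : n.Partition, ∏ i ∈ Icc 1 n, ∏ j ∈ Icc 1 n,
          if j ≤ l.parts.count i then j else 1 := by
        simp_rw [partitionF, Nat.Partition.prod_factorial_count_parts_eq, prod_filter]
    _ = ∏ j ∈ Icc 1 n, ∏ i ∈ Icc 1 n, ∏ l : n.Partition,
          if j ≤ l.parts.count i then j else 1 := by
        rw [prod_comm, prod_congr rfl fun i _ => prod_comm, prod_comm]
    _ = _ := prod_congr rfl fun j _ => by
        simp_rw [← prod_filter, prod_const, prod_pow_eq_pow_sum]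

theorem prod_P_and_prod_F_eq_general (n : ℕ) :
    (∏ l : Nat.Partition n, partitionP l)
      = ∏ i ∈ Finset.Icc 1 n,
          i ^ (∑ j ∈ Finset.Icc 1 n, if i * j ≤ n then partitionFun (n - i * j) else 0) ∧
    (∏ l : Nat.Partition n, partitionF l)
      = ∏ i ∈ Finset.Icc 1 n,
          i ^ (∑ j ∈ Finset.Icc 1 n, if i * j ≤ n then partitionFun (n - i * j) else 0) := by
  have hcard {i : ℕ} (hi : i ∈ Icc 1 n) (j : ℕ) : #{l : n.Partition | j ≤ l.parts.count i}
      = if i * j ≤ n then partitionFun (n - i * j) else 0 :=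
    Nat.Partition.card_filter_le_count_parts (mem_Icc.mp hi).1 j
  refine ⟨?_, ?_⟩
  · rw [prod_partitionP_eq]
    exact prod_congr rfl fun i hi => by simp_rw [hcard hi]
  · rw [prod_partitionF_eq]
    exact prod_congr rfl fun j _ => congrArg (j ^ ·) <|
      sum_congr rfl fun i hi => by rw [hcard hi, mul_comm]

theorem prod_P_and_prod_F_eq (n : ℕ) (hn : 0 < n) :
    (∏ l : Nat.Partition n, partitionP l)
      = ∏ i ∈ Finset.Icc 1 n,
          i ^ (∑ j ∈ Finset.Icc 1 n, if i * j ≤ n then partitionFun (n - i * j) else 0) ∧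
    (∏ l : Nat.Partition n, partitionF l)
      = ∏ i ∈ Finset.Icc 1 n,
          i ^ (∑ j ∈ Finset.Icc 1 n, if i * j ≤ n then partitionFun (n - i * j) else 0) :=
  prod_P_and_prod_F_eq_general n
end

section
/- If H is a bialgebra over a commutative ring R with a structural basis, then every primitive element of H is liftable: in fact each basis primitive Z_{ε_i} is lifted by the group-like series Σ_{n≥0} Z_{nε_i} xⁿ, and liftable elements form an R-module. -/
/-! A liftable element is the degree-one coefficient of a power series `F = ∑ aₙ Xⁿ` with
`a₀ = 1` that is group-like: `Δ F = (F ⊗ 1) · (1 ⊗ F)` in `(H ⊗ H)⟦X⟧`. Products of group-like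
series are group-like because the images of `H ⊗ 1` and `1 ⊗ H` commute, and rescaling
`aₙ ↦ rⁿ aₙ` preserves the condition, so the liftable elements form a submodule.

For a structural basis, applying `Z_β^* ⊗ Z_γ^*` to `Δ x` gives the `Z_{β+γ}`-coordinate of `x`.
If `x` is primitive this yields `x_{β+γ} = x_β [γ = 0] + [β = 0] x_γ`. Taking `β = γ = 0` kills
`x_0`, and for `α ≠ 0` not of the form `εᵢ`, writing `α = εᵢ + γ` with `γ ≠ 0` kills `x_α`.
So `x` is a combination of the `Z_{εᵢ}`, each lifted by the series `∑ Z_{n εᵢ} Xⁿ`. -/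

open TensorProduct Coalgebra

variable {R H I : Type*} [DecidableEq I] [CommRing R] [Ring H] [Bialgebra R H]

/-- `x` is primitive: `Δ(x) = x ⊗ 1 + 1 ⊗ x`. -/
def IsPrimitive (R : Type*) {H : Type*} [CommRing R] [Ring H] [Bialgebra R H] (x : H) : Prop :=
  comul (R := R) x = x ⊗ₜ[R] 1 + 1 ⊗ₜ[R] x

/-- `x` is liftable. -/
def Liftable (R : Type*) {H : Type*} [CommRing R] [Ring H] [Bialgebra R H] (x : H) : Prop :=
  ∃ a : ℕ → H, a 0 = 1 ∧ a 1 = x ∧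
    ∀ n, comul (R := R) (a n) = ∑ m ∈ Finset.range (n + 1), a m ⊗ₜ[R] a (n - m)

open Finset PowerSeries

theorem PowerSeries.commute_of_forall_coeff_commute {S : Type*} [Ring S] {F G : S⟦X⟧}
    (h : ∀ i j, Commute (coeff i F) (coeff j G)) : Commute F G := by
  ext n
  rw [coeff_mul, coeff_mul, ← Nat.sum_antidiagonal_swap]
  exact sum_congr rfl fun p _ => (h p.2 p.1).eq

variable (R) in
def IsGroupLikeSeries (F : H⟦X⟧) : Prop :=
  mapAlgHom (Bialgebra.comulAlgHom R H) F =
    mapAlgHom (Algebra.TensorProduct.includeLeft : H →ₐ[R] H ⊗[R] H) F *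
      mapAlgHom Algebra.TensorProduct.includeRight F

theorem coeff_mapAlgHom_includeLeft_mul_mapAlgHom_includeRight (F G : H⟦X⟧) (n : ℕ) :
    coeff n (mapAlgHom (Algebra.TensorProduct.includeLeft : H →ₐ[R] H ⊗[R] H) F *
        mapAlgHom Algebra.TensorProduct.includeRight G) =
      ∑ m ∈ range (n + 1), coeff m F ⊗ₜ[R] coeff (n - m) G := by
  rw [coeff_mul, Nat.sum_antidiagonal_eq_sum_range_succ (fun i j => coeff i _ * coeff j _)]
  simp [mapAlgHom_apply, Algebra.TensorProduct.tmul_mul_tmul]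

theorem isGroupLikeSeries_iff (F : H⟦X⟧) :
    IsGroupLikeSeries R F ↔
      ∀ n, comul (R := R) (coeff n F) = ∑ m ∈ range (n + 1), coeff m F ⊗ₜ[R] coeff (n - m) F := by
  refine PowerSeries.ext_iff.trans (forall_congr' fun n => ?_)
  rw [coeff_mapAlgHom_includeLeft_mul_mapAlgHom_includeRight, mapAlgHom_apply, coeff_map]
  rfl

theorem liftable_iff_exists_isGroupLikeSeries {x : H} :
    Liftable R x ↔ ∃ F : H⟦X⟧, coeff 0 F = 1 ∧ coeff 1 F = x ∧ IsGroupLikeSeries R F := by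
  simp only [isGroupLikeSeries_iff]
  constructor
  · rintro ⟨a, h0, h1, ha⟩
    exact ⟨mk a, by simpa using h0, by simpa using h1, by simpa using ha⟩
  · rintro ⟨F, h0, h1, hF⟩
    exact ⟨fun n => coeff n F, h0, h1, hF⟩

theorem IsGroupLikeSeries.one : IsGroupLikeSeries R (1 : H⟦X⟧) := by
  simp [IsGroupLikeSeries]

theorem IsGroupLikeSeries.mul {F G : H⟦X⟧} (hF : IsGroupLikeSeries R F)
    (hG : IsGroupLikeSeries R G) : IsGroupLikeSeries R (F * G) := by
  have hcomm : Commute (mapAlgHom (Algebra.TensorProduct.includeRight : H →ₐ[R] H ⊗[R] H) F)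
      (mapAlgHom (Algebra.TensorProduct.includeLeft : H →ₐ[R] H ⊗[R] H) G) :=
    commute_of_forall_coeff_commute fun i j => by
      simp only [mapAlgHom_apply, coeff_map]
      exact (Commute.one_left _).tmul (Commute.one_right _)
  rw [IsGroupLikeSeries, map_mul, map_mul, map_mul, hF, hG]
  exact hcomm.mul_mul_mul_comm _ _

theorem liftable_zero : Liftable R (0 : H) :=
  liftable_iff_exists_isGroupLikeSeries.2 ⟨1, by simp, by simp, .one⟩

theorem Liftable.add {x y : H} (hx : Liftable R x) (hy : Liftable R y) : Liftable R (x + y) := by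
  obtain ⟨F, hF0, hF1, hF⟩ := liftable_iff_exists_isGroupLikeSeries.1 hx
  obtain ⟨G, hG0, hG1, hG⟩ := liftable_iff_exists_isGroupLikeSeries.1 hy
  refine liftable_iff_exists_isGroupLikeSeries.2 ⟨F * G, ?_, ?_, hF.mul hG⟩
  · simp [coeff_mul, hF0, hG0]
  · simp [coeff_mul, Nat.antidiagonal_succ, hF0, hF1, hG0, hG1, add_comm]

theorem Liftable.smul (r : R) {x : H} (hx : Liftable R x) : Liftable R (r • x) := by
  obtain ⟨a, ha0, ha1, ha⟩ := hx
  refine ⟨fun n => r ^ n • a n, by simp [ha0], by simp [ha1], fun n => ?_⟩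
  simp only [map_smul, ha, smul_sum, tmul_smul, smul_tmul', smul_smul, ← pow_add]
  refine sum_congr rfl fun m hm => ?_
  rw [Nat.sub_add_cancel (Nat.lt_succ_iff.1 (mem_range.1 hm))]

variable (R H) in
def liftableSubmodule : Submodule R H where
  carrier := {x | Liftable R x}
  add_mem' := Liftable.add
  zero_mem' := liftable_zero
  smul_mem' := Liftable.smul

section StructuralBasis

def IsStructuralBasis (Z : Module.Basis (I →₀ ℕ) R H) : Prop :=
  ∀ α, comul (R := R) (Z α) = ∑ p ∈ antidiagonal α, Z p.1 ⊗ₜ[R] Z p.2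

variable {Z : Module.Basis (I →₀ ℕ) R H}

theorem IsStructuralBasis.comul_single (hZ : IsStructuralBasis Z) (i : I) (n : ℕ) :
    comul (R := R) (Z (Finsupp.single i n)) =
      ∑ m ∈ range (n + 1), Z (Finsupp.single i m) ⊗ₜ[R] Z (Finsupp.single i (n - m)) := by
  rw [hZ, Finsupp.antidiagonal_single, sum_map]
  exact Nat.sum_antidiagonal_eq_sum_range_succ
    (fun a b => Z (Finsupp.single i a) ⊗ₜ[R] Z (Finsupp.single i b)) n

theorem IsStructuralBasis.liftable_single_one (hZ : IsStructuralBasis Z) (hZ0 : Z 0 = 1)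
    (i : I) : Liftable R (Z (Finsupp.single i 1)) :=
  ⟨fun n => Z (Finsupp.single i n), by simpa using hZ0, rfl, hZ.comul_single i⟩

theorem IsStructuralBasis.coord_mul_coord_comul (hZ : IsStructuralBasis Z) (β γ : I →₀ ℕ)
    (x : H) :
    LinearMap.mul' R R (TensorProduct.map (Z.coord β) (Z.coord γ) (comul x)) =
      Z.coord (β + γ) x := by
  suffices LinearMap.mul' R R ∘ₗ TensorProduct.map (Z.coord β) (Z.coord γ) ∘ₗ comul =
      Z.coord (β + γ) from LinearMap.congr_fun this x
  refine Z.ext fun α => ?_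
  simp only [LinearMap.comp_apply, hZ α, map_sum, TensorProduct.map_tmul, LinearMap.mul'_apply,
    Module.Basis.coord_apply, Module.Basis.repr_self, Finsupp.single_apply, ite_zero_mul_ite_zero,
    mul_one]
  simp_rw [← Prod.mk.injEq, Prod.mk.eta]
  simp only [sum_ite_eq', HasAntidiagonal.mem_antidiagonal, eq_comm]

theorem IsStructuralBasis.repr_add_of_isPrimitive (hZ : IsStructuralBasis Z) {x : H}
    (hx : IsPrimitive R x) (β γ : I →₀ ℕ) :
    Z.repr x (β + γ) = Z.repr x β * Z.repr 1 γ + Z.repr 1 β * Z.repr x γ := by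
  have h := hZ.coord_mul_coord_comul β γ x
  rw [hx] at h
  simpa using h.symm

theorem IsStructuralBasis.repr_eq_zero_of_isPrimitive (hZ : IsStructuralBasis Z)
    (hZ0 : Z 0 = 1) {x : H} (hx : IsPrimitive R x) {α : I →₀ ℕ}
    (hα : ∀ i, α ≠ Finsupp.single i 1) : Z.repr x α = 0 := by
  have hsplit : ∀ β γ, Z.repr x (β + γ) =
      (if γ = 0 then Z.repr x β else 0) + (if β = 0 then Z.repr x γ else 0) := by
    intro β γ
    rw [hZ.repr_add_of_isPrimitive hx, ← hZ0, Z.repr_self, Finsupp.single_apply,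
      Finsupp.single_apply]
    simp [eq_comm]
  obtain rfl | ⟨i, hi⟩ := (eq_or_ne α 0).imp_right Finsupp.support_nonempty_iff.2
  · simpa using hsplit 0 0
  have hle : Finsupp.single i 1 ≤ α :=
    Finsupp.single_le_iff.2 (Nat.one_le_iff_ne_zero.2 (Finsupp.mem_support_iff.1 hi))
  have hrest : α - Finsupp.single i 1 ≠ 0 := fun h =>
    hα i (le_antisymm (tsub_eq_zero_iff_le.1 h) hle)
  have := hsplit (Finsupp.single i 1) (α - Finsupp.single i 1)
  rwa [add_tsub_cancel_of_le hle, if_neg hrest, if_neg (by simp), add_zero] at this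

theorem IsStructuralBasis.mem_span_of_isPrimitive (hZ : IsStructuralBasis Z) (hZ0 : Z 0 = 1)
    {x : H} (hx : IsPrimitive R x) :
    x ∈ Submodule.span R (Set.range fun i => Z (Finsupp.single i 1)) := by
  rw [Set.range_comp' Z, Z.mem_span_image]
  intro α hα
  by_contra h
  exact Finsupp.mem_support_iff.1 hα
    (hZ.repr_eq_zero_of_isPrimitive hZ0 hx fun i hi => h ⟨i, hi.symm⟩)

end StructuralBasis

/-- Lemma 2.6: if a bialgebra `H` has a structural basis `{Z_α}` then every primitive
element of `H` is liftable; indeed each basis primitive `Z_{ε_i}` is lifted by the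
group-like series `∑ₙ Z_{n·ε_i} xⁿ`, and the liftable elements form an `R`-module. -/
theorem primitive_liftable_of_structural_basis
    (Z : Module.Basis (I →₀ ℕ) R H) (hZ0 : Z 0 = 1)
    (hZ : ∀ α : I →₀ ℕ,
      comul (R := R) (Z α) = ∑ p ∈ Finset.HasAntidiagonal.antidiagonal α, Z p.1 ⊗ₜ[R] Z p.2) :
    (∀ i : I, ∀ n : ℕ,
      comul (R := R) (Z (Finsupp.single i n)) =
        ∑ m ∈ Finset.range (n + 1),
          Z (Finsupp.single i m) ⊗ₜ[R] Z (Finsupp.single i (n - m))) ∧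
    (∀ i : I, Liftable R (Z (Finsupp.single i 1))) ∧
    (∃ M : Submodule R H, ∀ x : H, x ∈ M ↔ Liftable R x) ∧
    ∀ x : H, IsPrimitive R x → Liftable R x := by
  replace hZ : IsStructuralBasis Z := hZ
  refine ⟨hZ.comul_single, hZ.liftable_single_one hZ0,
    ⟨liftableSubmodule R H, fun _ => Iff.rfl⟩, fun x hx => ?_⟩
  have hspan : Submodule.span R (Set.range fun i => Z (Finsupp.single i 1)) ≤
      liftableSubmodule R H :=
    Submodule.span_le.2 <| Set.range_subset_iff.2 (hZ.liftable_single_one hZ0)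
  exact hspan (hZ.mem_span_of_isPrimitive hZ0 hx)
end
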